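/- Fix d ≥ 1, E > 0, a nonempty finite codebook 𝒳 ⊆ {−√E, √E}^d, a positive-definite covariance matrix Σ ∈ ℝ^{d×d}, and a Borel-measurable hard-decision map h : ℝ^d → ℝ^d. Let x̄ be uniformly distributed on 𝒳 and let g be a centered multivariate Gaussian on ℝ^d with covariance Σ, independent of x̄. For j ∈ {1,…,d} and b ∈ {−√E, √E} set D_j(b) = {s ∈ ℝ^d : h(s)_j = b}, and assume P(x̄ + g ∈ ∂D_j(b)) = 0 for every j and b, where ∂ denotes the topological frontier. Suppose that on some probability space, for each L ≥ 1 there are random vectors x^{(L)}_1,…,x^{(L)}_L taking values in 𝒳 and s^{(L)}_1,…,s^{(L)}_L taking values in ℝ^d such that for every bounded Lipschitz function φ : ℝ^d × ℝ^d → ℝ, almost surely (1/L)∑_{ℓ=1}^L φ(x^{(L)}_ℓ, s^{(L)}_ℓ) → E[φ(x̄, x̄ + g)] as L → ∞. Then almost surely the empirical bit-error rate converges: (1/(Ld)) ∑_{ℓ=1}^L ∑_{j=1}^d 1{ h(s^{(L)}_ℓ)_j ≠ x^{(L)}_{ℓ,j} } → (1/d) ∑_{j=1}^d P( h(x̄ +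 g)_j ≠ x̄_j ). -/

import Mathlib

open MeasureTheory ProbabilityTheory Filter Topology Metric Matrix

open scoped Classical

noncomputable section BERauxSection

namespace BERaux

/-- Linear clamp `max (1 - c*t) 0`. -/
def clampLin (c t : ℝ) : ℝ := max (1 - c * t) 0

lemma clampLin_nonneg (c t : ℝ) : 0 ≤ clampLin c t := le_max_right _ _

lemma clampLin_le_one {c t : ℝ} (hc : 0 ≤ c) (ht : 0 ≤ t) : clampLin c t ≤ 1 :=
  max_le (by nlinarith) zero_le_one

lemma clampLin_zero (c : ℝ) : clampLin c 0 = 1 := by simp [clampLin]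

lemma clampLin_of_one_le {c t : ℝ} (hct : 1 ≤ c * t) : clampLin c t = 0 :=
  max_eq_right (by linarith)

lemma lipschitz_clampLin {c : ℝ} (hc : 0 ≤ c) : LipschitzWith c.toNNReal (clampLin c) := by
  apply LipschitzWith.of_dist_le_mul
  intro x y
  rw [Real.dist_eq, Real.dist_eq, Real.coe_toNNReal c hc]
  calc |clampLin c x - clampLin c y| ≤ |(1 - c * x) - (1 - c * y)| :=
        abs_max_sub_max_le_abs _ _ _
    _ = c * |x - y| := by
        rw [show (1 - c * x) - (1 - c * y) = -(c * (x - y)) by ring, abs_neg, abs_mul,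
          abs_of_nonneg hc]

variable {α : Type*} [PseudoMetricSpace α]

/-- Upper Lipschitz approximation of the indicator of `B`. -/
def fUp (n : ℕ) (B : Set α) (s : α) : ℝ :=
  if B = ∅ then 0 else clampLin ((n : ℝ) + 1) (infDist s B)

lemma fUp_nonneg (n : ℕ) (B : Set α) (s : α) : 0 ≤ fUp n B s := by
  unfold fUp; split
  · exact le_refl 0
  · exact clampLin_nonneg _ _

lemma fUp_le_one (n : ℕ) (B : Set α) (s : α) : fUp n B s ≤ 1 := by
  unfold fUp; split
  · exact zero_le_one
  · exact clampLin_le_one (by positivity) infDist_nonneg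

lemma fUp_of_mem {n : ℕ} {B : Set α} {s : α} (hs : s ∈ B) : fUp n B s = 1 := by
  have hB : B ≠ ∅ := (Set.nonempty_of_mem hs).ne_empty
  rw [fUp, if_neg hB, infDist_zero_of_mem hs, clampLin_zero]

lemma exists_lipschitz_fUp (n : ℕ) (B : Set α) : ∃ K : NNReal, LipschitzWith K (fUp n B) := by
  by_cases hB : B = ∅
  · refine ⟨0, ?_⟩
    unfold fUp
    simp only [if_pos hB]
    exact LipschitzWith.const 0
  · refine ⟨((n : ℝ) + 1).toNNReal * 1, ?_⟩
    unfold fUp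
    simp only [if_neg hB]
    exact (lipschitz_clampLin (by positivity)).comp (lipschitz_infDist_pt B)

lemma tendsto_fUp (B : Set α) (s : α) :
    Tendsto (fun n => fUp n B s) atTop
      (𝓝 (Set.indicator (closure B) (fun _ => (1 : ℝ)) s)) := by
  rcases eq_or_ne B ∅ with hB | hB
  · subst hB
    simp only [fUp, if_pos rfl, closure_empty, Set.indicator_empty]
    exact tendsto_const_nhds
  · have hBne : B.Nonempty := Set.nonempty_iff_ne_empty.mpr hB
    by_cases hs : s ∈ closure B
    · have h0 : infDist s B = 0 := (mem_closure_iff_infDist_zero hBne).mp hs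
      simp only [fUp, if_neg hB, h0, clampLin_zero, Set.indicator_of_mem hs]
      exact tendsto_const_nhds
    · have hpos : 0 < infDist s B := by
        rcases lt_or_eq_of_le (infDist_nonneg (x := s) (s := B)) with h | h
        · exact h
        · exact absurd ((mem_closure_iff_infDist_zero hBne).mpr h.symm) hs
      rw [Set.indicator_of_notMem hs]
      apply Tendsto.congr' _ tendsto_const_nhds
      filter_upwards [eventually_ge_atTop ⌈(infDist s B)⁻¹⌉₊] with n hn
      have h1 : (infDist s B)⁻¹ ≤ (n : ℝ) + 1 := by
        calc (infDist s B)⁻¹ ≤ (⌈(infDist s B)⁻¹⌉₊ : ℝ) := Nat.le_ceil _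
          _ ≤ (n : ℝ) := by exact_mod_cast hn
          _ ≤ (n : ℝ) + 1 := by linarith
      have h2 : (1 : ℝ) ≤ ((n : ℝ) + 1) * infDist s B := by
        have := (inv_mul_cancel₀ hpos.ne').symm
        nlinarith
      rw [fUp, if_neg hB, clampLin_of_one_le h2]

/-- ψ-bump: equals `1` at `b` and `0` far from `b`. -/
def psi (c b u : ℝ) : ℝ := clampLin c |u - b|

lemma psi_nonneg (c b u : ℝ) : 0 ≤ psi c b u := clampLin_nonneg _ _

lemma psi_self (c b : ℝ) : psi c b b = 1 := by simp [psi, clampLin_zero]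

lemma psi_of_far {c b u : ℝ} (h : 1 ≤ c * |u - b|) : psi c b u = 0 := clampLin_of_one_le h

lemma exists_lipschitz_psi {c : ℝ} (hc : 0 ≤ c) (b : ℝ) :
    ∃ K : NNReal, LipschitzWith K (psi c b) := by
  refine ⟨c.toNNReal * 1, (lipschitz_clampLin hc).comp ?_⟩
  apply LipschitzWith.of_dist_le_mul
  intro x y
  rw [Real.dist_eq, Real.dist_eq, NNReal.coe_one, one_mul]
  have := abs_sub_abs_le_abs_sub (x - b) (y - b)
  calc |(|x - b|) - (|y - b|)| ≤ |x - y| := by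
        rw [abs_le]
        constructor
        · have := abs_sub_abs_le_abs_sub (y - b) (x - b)
          rw [show y - b - (x - b) = -(x - y) by ring, abs_neg] at this
          linarith
        · have := abs_sub_abs_le_abs_sub (x - b) (y - b)
          rw [show x - b - (y - b) = x - y by ring] at this
          linarith

lemma exists_lipschitz_sum {β : Type*} [PseudoMetricSpace β] {ι : Type*} (t : Finset ι)
    (f : ι → β → ℝ) (hf : ∀ i ∈ t, ∃ K : NNReal, LipschitzWith K (f i)) :
    ∃ K : NNReal, LipschitzWith K (fun x => ∑ i ∈ t, f i x) := by
  classical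
  induction t using Finset.induction with
  | empty => exact ⟨0, by simpa using LipschitzWith.const (0 : ℝ)⟩
  | @insert a t ha ih =>
    obtain ⟨K1, h1⟩ := hf a (Finset.mem_insert_self a t)
    obtain ⟨K2, h2⟩ := ih (fun i hi => hf i (Finset.mem_insert_of_mem hi))
    refine ⟨K1 + K2, ?_⟩
    have := h1.add h2
    simpa [Finset.sum_insert ha] using this

lemma mem_closure_iff_of_not_frontier {B : Set α} {s : α} (hs : s ∉ frontier B) :
    s ∈ closure B ↔ s ∈ B := by
  constructor
  · intro hc
    have : s ∈ interior B := by
      by_contra hi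
      exact hs ⟨hc, hi⟩
    exact interior_subset this
  · exact fun hb => subset_closure hb

end BERaux

end BERauxSection

/-- Theorem 1 of the paper (BER statement), in conditional form: assuming the
state-evolution characterization of AMP (a.s. convergence of empirical averages of
bounded Lipschitz test functions of `(signal row, effective observation row)` to
their expectation under the law of `(x̄, x̄ + g)` with `g ∼ N_d(0, Σ)` independent
of `x̄` uniform on the codebook `𝒳`), and assuming the decision regions of the
hard-decision map `h` have null frontier under the law of `x̄ + g`, the empirical
bit-error rate converges almost surely to
`(1/d) ∑ⱼ P(h(x̄ + g)ⱼ ≠ x̄ⱼ)`. -/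
theorem amp_asymptotic_BER_iid
    (d : ℕ) (hd : 1 ≤ d) (E : ℝ) (hE : 0 < E)
    (𝒳 : Finset (Fin d → ℝ)) (h𝒳 : 𝒳.Nonempty)
    (h𝒳sub : ∀ x ∈ 𝒳, ∀ j, x j = -Real.sqrt E ∨ x j = Real.sqrt E)
    (Sig : Matrix (Fin d) (Fin d) ℝ) (hSig : Sig.PosDef)
    (h : (Fin d → ℝ) → (Fin d → ℝ)) (hmeas : Measurable h)
    {Ω : Type*} [MeasureSpace Ω] [IsProbabilityMeasure (ℙ : Measure Ω)]
    (xbar g : Ω → (Fin d → ℝ)) (hxbarMeas : Measurable xbar) (hgMeas : Measurable g)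
    -- x̄ is uniformly distributed on the codebook 𝒳
    (hxbarLaw : Measure.map xbar ℙ = (PMF.uniformOfFinset 𝒳 h𝒳).toMeasure)
    -- g is a centered multivariate Gaussian with covariance Σ:
    -- every linear functional ⟨t, g⟩ is N(0, tᵀ Σ t)
    (hgLaw : ∀ t : Fin d → ℝ,
      Measure.map (fun ω => ∑ j, t j * g ω j) ℙ =
        gaussianReal 0 (Real.toNNReal (t ⬝ᵥ Sig.mulVec t)))
    -- g is independent of x̄
    (hindep : IndepFun xbar g ℙ)
    -- the decision regions have null frontier under the law of x̄ + g
    (hfrontier : ∀ j : Fin d, ∀ b ∈ ({-Real.sqrt E, Real.sqrt E} : Set ℝ),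
      ℙ {ω | (xbar ω + g ω) ∈ frontier {s : Fin d → ℝ | h s j = b}} = 0)
    -- the per-system-size random vectors x^{(L)}_ℓ ∈ 𝒳 and s^{(L)}_ℓ ∈ ℝ^d
    (X S : ℕ → ℕ → Ω → (Fin d → ℝ))
    (hXmeas : ∀ L ℓ, Measurable (X L ℓ)) (hSmeas : ∀ L ℓ, Measurable (S L ℓ))
    (hXval : ∀ L ℓ ω, ℓ < L → X L ℓ ω ∈ 𝒳)
    -- the state-evolution characterization: a.s. convergence of empirical averages
    -- of bounded Lipschitz test functions
    (hSE : ∀ φ : ((Fin d → ℝ) × (Fin d → ℝ)) → ℝ,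
      (∃ C : ℝ, ∀ p, |φ p| ≤ C) → (∃ K : NNReal, LipschitzWith K φ) →
      ∀ᵐ ω ∂ℙ, Tendsto
        (fun L : ℕ => (1 / (L : ℝ)) * ∑ ℓ ∈ Finset.range L, φ (X L ℓ ω, S L ℓ ω))
        atTop (𝓝 (∫ ω, φ (xbar ω, xbar ω + g ω) ∂ℙ))) :
    -- conclusion: a.s. convergence of the empirical bit-error rate
    ∀ᵐ ω ∂ℙ, Tendsto
      (fun L : ℕ => (1 / ((L : ℝ) * d)) * ∑ ℓ ∈ Finset.range L, ∑ j : Fin d,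
        (if h (S L ℓ ω) j ≠ X L ℓ ω j then (1 : ℝ) else 0))
      atTop
      (𝓝 ((1 / (d : ℝ)) * ∑ j : Fin d,
        (ℙ {ω | h (xbar ω + g ω) j ≠ xbar ω j}).toReal)) := by
  classical
  have hsqrt : 0 < Real.sqrt E := Real.sqrt_pos.mpr hE
  set e1 : ℝ := -Real.sqrt E with he1
  set e2 : ℝ := Real.sqrt E with he2
  set c : ℝ := (Real.sqrt E)⁻¹ with hc
  have hc0 : 0 ≤ c := by positivity
  have hfar12 : 1 ≤ c * |e2 - e1| := by
    rw [he1, he2, hc, show Real.sqrt E - -Real.sqrt E = 2 * Real.sqrt E by ring,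
      abs_of_nonneg (by positivity),
      show (Real.sqrt E)⁻¹ * (2 * Real.sqrt E) = 2 * ((Real.sqrt E)⁻¹ * Real.sqrt E) by ring,
      inv_mul_cancel₀ hsqrt.ne']
    norm_num
  have hfar21 : 1 ≤ c * |e1 - e2| := by rw [abs_sub_comm]; exact hfar12
  -- decision regions for "error at coordinate j against bit b"
  set B : Fin d → ℝ → Set (Fin d → ℝ) := fun j b => {s | h s j ≠ b} with hB
  have hmemB : ∀ (s : Fin d → ℝ) (j : Fin d) (b : ℝ), s ∈ B j b ↔ h s j ≠ b := by
    intro s j b; rw [hB]; rfl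
  have hmemBc : ∀ (s : Fin d → ℝ) (j : Fin d) (b : ℝ), s ∈ (B j b)ᶜ ↔ h s j = b := by
    intro s j b; rw [Set.mem_compl_iff, hmemB]; tauto
  have hfrB : ∀ j : Fin d, ∀ b, (b = e1 ∨ b = e2) →
      ℙ {ω | (xbar ω + g ω) ∈ frontier (B j b)} = 0 := by
    intro j b hb
    have hBc : B j b = {s : Fin d → ℝ | h s j = b}ᶜ := by
      rw [hB]; ext s; simp
    have : frontier (B j b) = frontier {s : Fin d → ℝ | h s j = b} := by
      rw [hBc, frontier_compl]
    rw [this]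
    exact hfrontier j b (by rcases hb with hb | hb <;> simp [hb, he1, he2])
  -- the good a.e. event coming from the law of (x̄, x̄ + g)
  have hx𝒳ae : ∀ᵐ ω ∂ℙ, xbar ω ∈ 𝒳 := by
    rw [ae_iff]
    have hms : MeasurableSet ((↑𝒳 : Set (Fin d → ℝ)))ᶜ := 𝒳.finite_toSet.measurableSet.compl
    have : {ω | ¬ xbar ω ∈ 𝒳} = xbar ⁻¹' ((↑𝒳 : Set (Fin d → ℝ)))ᶜ := rfl
    rw [this, ← Measure.map_apply hxbarMeas hms, hxbarLaw,
      PMF.toMeasure_apply_eq_zero_iff _ _, PMF.support_uniformOfFinset]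
    exact disjoint_compl_right
    exact hms
  have hgood : ∀ᵐ ω ∂ℙ, xbar ω ∈ 𝒳 ∧ ∀ j : Fin d,
      (xbar ω + g ω) ∉ frontier (B j e1) ∧ (xbar ω + g ω) ∉ frontier (B j e2) := by
    have h2 : ∀ j : Fin d, ∀ᵐ ω ∂ℙ,
        (xbar ω + g ω) ∉ frontier (B j e1) ∧ (xbar ω + g ω) ∉ frontier (B j e2) := by
      intro j
      have hA : ∀ b, (b = e1 ∨ b = e2) → ∀ᵐ ω ∂ℙ, (xbar ω + g ω) ∉ frontier (B j b) := by
        intro b hb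
        have h0 := hfrB j b hb
        rw [ae_iff]
        simpa [not_not] using h0
      exact (hA e1 (Or.inl rfl)).and (hA e2 (Or.inr rfl))
    filter_upwards [hx𝒳ae, ae_all_iff.mpr h2] with ω h1 h2
    exact ⟨h1, h2⟩
  -- the Lipschitz upper/lower approximations
  set ΦU : ℕ → ((Fin d → ℝ) × (Fin d → ℝ)) → ℝ := fun n p => ∑ j : Fin d,
      (min (BERaux.psi c e1 (p.1 j)) (BERaux.fUp n (B j e1) p.2) +
       min (BERaux.psi c e2 (p.1 j)) (BERaux.fUp n (B j e2) p.2)) with hΦU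
  set ΦL : ℕ → ((Fin d → ℝ) × (Fin d → ℝ)) → ℝ := fun n p => ∑ j : Fin d,
      (min (BERaux.psi c e1 (p.1 j)) (1 - BERaux.fUp n ((B j e1))ᶜ p.2) +
       min (BERaux.psi c e2 (p.1 j)) (1 - BERaux.fUp n ((B j e2))ᶜ p.2)) with hΦL
  -- bounds on individual terms
  have hU_nonneg : ∀ n (j : Fin d) b (p : (Fin d → ℝ) × (Fin d → ℝ)),
      0 ≤ min (BERaux.psi c b (p.1 j)) (BERaux.fUp n (B j b) p.2) :=
    fun n j b p => le_min (BERaux.psi_nonneg _ _ _) (BERaux.fUp_nonneg _ _ _)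
  have hU_le_one : ∀ n (j : Fin d) b (p : (Fin d → ℝ) × (Fin d → ℝ)),
      min (BERaux.psi c b (p.1 j)) (BERaux.fUp n (B j b) p.2) ≤ 1 :=
    fun n j b p => (min_le_right _ _).trans (BERaux.fUp_le_one _ _ _)
  have hL_nonneg : ∀ n (j : Fin d) b (p : (Fin d → ℝ) × (Fin d → ℝ)),
      0 ≤ min (BERaux.psi c b (p.1 j)) (1 - BERaux.fUp n ((B j b))ᶜ p.2) :=
    fun n j b p => le_min (BERaux.psi_nonneg _ _ _)
      (sub_nonneg.mpr (BERaux.fUp_le_one _ _ _))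
  have hL_le_one : ∀ n (j : Fin d) b (p : (Fin d → ℝ) × (Fin d → ℝ)),
      min (BERaux.psi c b (p.1 j)) (1 - BERaux.fUp n ((B j b))ᶜ p.2) ≤ 1 :=
    fun n j b p => (min_le_right _ _).trans (by linarith [BERaux.fUp_nonneg n ((B j b))ᶜ p.2])
  -- boundedness of ΦU, ΦL
  have hΦU_abs : ∀ n p, |ΦU n p| ≤ 2 * d := by
    intro n p
    rw [abs_le]
    constructor
    · have : (0:ℝ) ≤ ΦU n p := by
        rw [hΦU]
        exact Finset.sum_nonneg fun j _ => add_nonneg (hU_nonneg n j e1 p) (hU_nonneg n j e2 p)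
      nlinarith [Nat.cast_nonneg (α := ℝ) d]
    · rw [hΦU]
      calc (∑ j : Fin d, (min (BERaux.psi c e1 (p.1 j)) (BERaux.fUp n (B j e1) p.2) +
              min (BERaux.psi c e2 (p.1 j)) (BERaux.fUp n (B j e2) p.2)))
          ≤ ∑ _j : Fin d, (2:ℝ) := Finset.sum_le_sum fun j _ => by
              linarith [hU_le_one n j e1 p, hU_le_one n j e2 p]
        _ = 2 * d := by simp [Finset.sum_const, Finset.card_univ, mul_comm]
  have hΦL_abs : ∀ n p, |ΦL n p| ≤ 2 * d := by
    intro n p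
    rw [abs_le]
    constructor
    · have : (0:ℝ) ≤ ΦL n p := by
        rw [hΦL]
        exact Finset.sum_nonneg fun j _ => add_nonneg (hL_nonneg n j e1 p) (hL_nonneg n j e2 p)
      nlinarith [Nat.cast_nonneg (α := ℝ) d]
    · rw [hΦL]
      calc (∑ j : Fin d, (min (BERaux.psi c e1 (p.1 j)) (1 - BERaux.fUp n ((B j e1))ᶜ p.2) +
              min (BERaux.psi c e2 (p.1 j)) (1 - BERaux.fUp n ((B j e2))ᶜ p.2)))
          ≤ ∑ _j : Fin d, (2:ℝ) := Finset.sum_le_sum fun j _ => by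
              linarith [hL_le_one n j e1 p, hL_le_one n j e2 p]
        _ = 2 * d := by simp [Finset.sum_const, Finset.card_univ, mul_comm]
  -- Lipschitz continuity of ΦU, ΦL
  have hproj : ∀ j : Fin d, LipschitzWith 1 (fun p : (Fin d → ℝ) × (Fin d → ℝ) => p.1 j) := by
    intro j
    apply LipschitzWith.of_dist_le_mul
    intro p q
    rw [NNReal.coe_one, one_mul]
    calc dist (p.1 j) (q.1 j) ≤ dist p.1 q.1 := dist_le_pi_dist _ _ j
      _ ≤ dist p q := by rw [Prod.dist_eq]; exact le_max_left _ _
  have hsnd : LipschitzWith 1 (fun p : (Fin d → ℝ) × (Fin d → ℝ) => p.2) :=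
    LipschitzWith.prod_snd
  have hΦU_lip : ∀ n, ∃ K : NNReal, LipschitzWith K (ΦU n) := by
    intro n
    rw [hΦU]
    apply BERaux.exists_lipschitz_sum
    intro j _
    obtain ⟨K1, hK1⟩ := BERaux.exists_lipschitz_psi hc0 e1
    obtain ⟨K2, hK2⟩ := BERaux.exists_lipschitz_fUp (α := Fin d → ℝ) n (B j e1)
    obtain ⟨K3, hK3⟩ := BERaux.exists_lipschitz_psi hc0 e2
    obtain ⟨K4, hK4⟩ := BERaux.exists_lipschitz_fUp (α := Fin d → ℝ) n (B j e2)
    exact ⟨_, ((hK1.comp (hproj j)).min (hK2.comp hsnd)).add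
      ((hK3.comp (hproj j)).min (hK4.comp hsnd))⟩
  have hΦL_lip : ∀ n, ∃ K : NNReal, LipschitzWith K (ΦL n) := by
    intro n
    rw [hΦL]
    apply BERaux.exists_lipschitz_sum
    intro j _
    obtain ⟨K1, hK1⟩ := BERaux.exists_lipschitz_psi hc0 e1
    obtain ⟨K2, hK2⟩ := BERaux.exists_lipschitz_fUp (α := Fin d → ℝ) n ((B j e1))ᶜ
    obtain ⟨K3, hK3⟩ := BERaux.exists_lipschitz_psi hc0 e2
    obtain ⟨K4, hK4⟩ := BERaux.exists_lipschitz_fUp (α := Fin d → ℝ) n ((B j e2))ᶜ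
    exact ⟨_, ((hK1.comp (hproj j)).min
        ((LipschitzWith.const (1:ℝ)).sub (hK2.comp hsnd))).add
      ((hK3.comp (hproj j)).min ((LipschitzWith.const (1:ℝ)).sub (hK4.comp hsnd)))⟩
  -- apply the state evolution hypothesis
  have hUconv := fun n => hSE (ΦU n) ⟨2 * d, hΦU_abs n⟩ (hΦU_lip n)
  have hLconv := fun n => hSE (ΦL n) ⟨2 * d, hΦL_abs n⟩ (hΦL_lip n)
  -- the limiting integrand and its integral
  set err : Ω → ℝ := fun ω => ∑ j : Fin d,
      (if h (xbar ω + g ω) j ≠ xbar ω j then (1:ℝ) else 0) with herr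
  set T : ℝ := ∑ j : Fin d, (ℙ {ω | h (xbar ω + g ω) j ≠ xbar ω j}).toReal with hT
  have hxg : Measurable (fun ω => xbar ω + g ω) := hxbarMeas.add hgMeas
  have hpair : Measurable (fun ω => (xbar ω, xbar ω + g ω)) := hxbarMeas.prodMk hxg
  have hEj : ∀ j : Fin d, MeasurableSet {ω | h (xbar ω + g ω) j ≠ xbar ω j} := by
    intro j
    have h1 : Measurable fun ω => h (xbar ω + g ω) j :=
      (measurable_pi_apply j).comp (hmeas.comp hxg)
    have h2 : Measurable fun ω => xbar ω j := (measurable_pi_apply j).comp hxbarMeas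
    exact (measurableSet_eq_fun h1 h2).compl
  have hind : ∀ j : Fin d, (fun ω => if h (xbar ω + g ω) j ≠ xbar ω j then (1:ℝ) else 0)
      = Set.indicator {ω | h (xbar ω + g ω) j ≠ xbar ω j} (fun _ => (1:ℝ)) := by
    intro j
    funext ω
    by_cases hP : h (xbar ω + g ω) j ≠ xbar ω j
    · rw [if_pos hP, Set.indicator_of_mem
        (show ω ∈ {ω | h (xbar ω + g ω) j ≠ xbar ω j} from hP)]
    · rw [if_neg hP, Set.indicator_of_notMem
        (show ω ∉ {ω | h (xbar ω + g ω) j ≠ xbar ω j} from hP)]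
  have herrInt : ∀ j : Fin d,
      Integrable (fun ω => if h (xbar ω + g ω) j ≠ xbar ω j then (1:ℝ) else 0) ℙ := by
    intro j
    rw [hind j]
    exact (integrable_const (1:ℝ)).indicator (hEj j)
  have hinterr : ∫ ω, err ω ∂ℙ = T := by
    rw [herr, hT, integral_finset_sum _ (fun j _ => herrInt j)]
    refine Finset.sum_congr rfl fun j _ => ?_
    rw [hind j]
    exact integral_indicator_one (hEj j)
  -- pointwise limits of the approximations, on the good event
  have hselfU : ∀ (s : Fin d → ℝ) (j : Fin d) (b : ℝ), s ∉ frontier (B j b) →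
      Tendsto (fun n => min (BERaux.psi c b b) (BERaux.fUp n (B j b) s)) atTop
        (𝓝 (if h s j ≠ b then (1:ℝ) else 0)) := by
    intro s j b hfr
    have hval : Set.indicator (closure (B j b)) (fun _ => (1:ℝ)) s
        = if h s j ≠ b then (1:ℝ) else 0 := by
      by_cases hmem : h s j ≠ b
      · rw [Set.indicator_of_mem (subset_closure ((hmemB s j b).mpr hmem)), if_pos hmem]
      · rw [Set.indicator_of_notMem, if_neg hmem]
        intro hcl
        exact hmem ((hmemB s j b).mp ((BERaux.mem_closure_iff_of_not_frontier hfr).mp hcl))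
    have hv2 : min (BERaux.psi c b b) (Set.indicator (closure (B j b)) (fun _ => (1:ℝ)) s)
        = if h s j ≠ b then (1:ℝ) else 0 := by
      rw [BERaux.psi_self, hval]
      by_cases hmem : h s j ≠ b <;> simp [hmem]
    rw [← hv2]
    exact (tendsto_const_nhds (x := BERaux.psi c b b) (f := atTop (α := ℕ))).min
      (BERaux.tendsto_fUp (B j b) s)
  have hotherU : ∀ (s : Fin d → ℝ) (j : Fin d) (b u : ℝ), 1 ≤ c * |u - b| →
      Tendsto (fun n => min (BERaux.psi c b u) (BERaux.fUp n (B j b) s)) atTop (𝓝 0) := by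
    intro s j b u hfar
    have : ∀ n, min (BERaux.psi c b u) (BERaux.fUp n (B j b) s) = 0 := by
      intro n
      rw [BERaux.psi_of_far hfar]
      exact min_eq_left (BERaux.fUp_nonneg _ _ _)
    simpa [this] using tendsto_const_nhds (x := (0:ℝ)) (f := atTop (α := ℕ))
  have hselfL : ∀ (s : Fin d → ℝ) (j : Fin d) (b : ℝ), s ∉ frontier (B j b) →
      Tendsto (fun n => min (BERaux.psi c b b) (1 - BERaux.fUp n ((B j b))ᶜ s)) atTop
        (𝓝 (if h s j ≠ b then (1:ℝ) else 0)) := by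
    intro s j b hfr
    have hfrc : s ∉ frontier ((B j b))ᶜ := by rwa [frontier_compl]
    have hval : Set.indicator (closure ((B j b))ᶜ) (fun _ => (1:ℝ)) s
        = if h s j = b then (1:ℝ) else 0 := by
      by_cases hmem : h s j = b
      · rw [Set.indicator_of_mem (subset_closure ((hmemBc s j b).mpr hmem)), if_pos hmem]
      · rw [Set.indicator_of_notMem, if_neg hmem]
        intro hcl
        exact hmem ((hmemBc s j b).mp ((BERaux.mem_closure_iff_of_not_frontier hfrc).mp hcl))
    have hv2 : min (BERaux.psi c b b)
        ((1:ℝ) - Set.indicator (closure ((B j b))ᶜ) (fun _ => (1:ℝ)) s)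
        = if h s j ≠ b then (1:ℝ) else 0 := by
      rw [BERaux.psi_self, hval]
      by_cases hmem : h s j = b <;> simp [hmem]
    rw [← hv2]
    exact (tendsto_const_nhds (x := BERaux.psi c b b) (f := atTop (α := ℕ))).min
      ((tendsto_const_nhds (x := (1:ℝ)) (f := atTop (α := ℕ))).sub
        (BERaux.tendsto_fUp ((B j b))ᶜ s))
  have hotherL : ∀ (s : Fin d → ℝ) (j : Fin d) (b u : ℝ), 1 ≤ c * |u - b| →
      Tendsto (fun n => min (BERaux.psi c b u) (1 - BERaux.fUp n ((B j b))ᶜ s)) atTop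
        (𝓝 0) := by
    intro s j b u hfar
    have : ∀ n, min (BERaux.psi c b u) (1 - BERaux.fUp n ((B j b))ᶜ s) = 0 := by
      intro n
      rw [BERaux.psi_of_far hfar]
      exact min_eq_left (sub_nonneg.mpr (BERaux.fUp_le_one _ _ _))
    simpa [this] using tendsto_const_nhds (x := (0:ℝ)) (f := atTop (α := ℕ))
  -- dominated convergence: the integrals converge to T
  have hIU : Tendsto (fun n => ∫ ω, ΦU n (xbar ω, xbar ω + g ω) ∂ℙ) atTop (𝓝 T) := by
    rw [← hinterr]
    apply tendsto_integral_of_dominated_convergence (bound := fun _ => 2 * (d:ℝ))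
    · intro n
      obtain ⟨K, hK⟩ := hΦU_lip n
      exact (hK.continuous.measurable.comp hpair).aestronglyMeasurable
    · exact integrable_const _
    · intro n
      filter_upwards with ω
      rw [Real.norm_eq_abs]
      exact hΦU_abs n _
    · filter_upwards [hgood] with ω hω
      obtain ⟨hx𝒳, hfrω⟩ := hω
      rw [herr, hΦU]
      apply tendsto_finset_sum
      intro j _
      rcases h𝒳sub (xbar ω) hx𝒳 j with hxj | hxj
      · simp only [hxj]
        simpa using (hselfU (xbar ω + g ω) j e1 (hfrω j).1).add
          (hotherU (xbar ω + g ω) j e2 e1 hfar21)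
      · simp only [hxj]
        simpa using (hotherU (xbar ω + g ω) j e1 e2 hfar12).add
          (hselfU (xbar ω + g ω) j e2 (hfrω j).2)
  have hIL : Tendsto (fun n => ∫ ω, ΦL n (xbar ω, xbar ω + g ω) ∂ℙ) atTop (𝓝 T) := by
    rw [← hinterr]
    apply tendsto_integral_of_dominated_convergence (bound := fun _ => 2 * (d:ℝ))
    · intro n
      obtain ⟨K, hK⟩ := hΦL_lip n
      exact (hK.continuous.measurable.comp hpair).aestronglyMeasurable
    · exact integrable_const _
    · intro n
      filter_upwards with ω
      rw [Real.norm_eq_abs]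
      exact hΦL_abs n _
    · filter_upwards [hgood] with ω hω
      obtain ⟨hx𝒳, hfrω⟩ := hω
      rw [herr, hΦL]
      apply tendsto_finset_sum
      intro j _
      rcases h𝒳sub (xbar ω) hx𝒳 j with hxj | hxj
      · simp only [hxj]
        simpa using (hselfL (xbar ω + g ω) j e1 (hfrω j).1).add
          (hotherL (xbar ω + g ω) j e2 e1 hfar21)
      · simp only [hxj]
        simpa using (hotherL (xbar ω + g ω) j e1 e2 hfar12).add
          (hselfL (xbar ω + g ω) j e2 (hfrω j).2)
  -- pointwise sandwich
  have hptU : ∀ n (x s : Fin d → ℝ), x ∈ 𝒳 → ∀ j : Fin d,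
      (if h s j ≠ x j then (1:ℝ) else 0) ≤
        min (BERaux.psi c e1 (x j)) (BERaux.fUp n (B j e1) s) +
        min (BERaux.psi c e2 (x j)) (BERaux.fUp n (B j e2) s) := by
    intro n x s hx j
    rcases h𝒳sub x hx j with hxj | hxj
    · rw [hxj]
      by_cases hQ : h s j ≠ e1
      · rw [if_pos hQ, BERaux.psi_self,
          BERaux.fUp_of_mem (n := n) ((hmemB s j e1).mpr hQ), min_self]
        have := le_min (BERaux.psi_nonneg c e2 e1) (BERaux.fUp_nonneg n (B j e2) s)
        linarith
      · rw [if_neg hQ]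
        have h1 := le_min (BERaux.psi_nonneg c e1 e1) (BERaux.fUp_nonneg n (B j e1) s)
        have h2 := le_min (BERaux.psi_nonneg c e2 e1) (BERaux.fUp_nonneg n (B j e2) s)
        linarith
    · rw [hxj]
      by_cases hQ : h s j ≠ e2
      · rw [if_pos hQ, BERaux.psi_self,
          BERaux.fUp_of_mem (n := n) ((hmemB s j e2).mpr hQ), min_self]
        have := le_min (BERaux.psi_nonneg c e1 e2) (BERaux.fUp_nonneg n (B j e1) s)
        linarith
      · rw [if_neg hQ]
        have h1 := le_min (BERaux.psi_nonneg c e1 e2) (BERaux.fUp_nonneg n (B j e1) s)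
        have h2 := le_min (BERaux.psi_nonneg c e2 e2) (BERaux.fUp_nonneg n (B j e2) s)
        linarith
  have hptL : ∀ n (x s : Fin d → ℝ), x ∈ 𝒳 → ∀ j : Fin d,
      min (BERaux.psi c e1 (x j)) (1 - BERaux.fUp n ((B j e1))ᶜ s) +
      min (BERaux.psi c e2 (x j)) (1 - BERaux.fUp n ((B j e2))ᶜ s) ≤
        (if h s j ≠ x j then (1:ℝ) else 0) := by
    intro n x s hx j
    rcases h𝒳sub x hx j with hxj | hxj
    · rw [hxj]
      have hz2 : min (BERaux.psi c e2 e1) (1 - BERaux.fUp n ((B j e2))ᶜ s) = 0 := by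
        rw [BERaux.psi_of_far hfar21]
        exact min_eq_left (sub_nonneg.mpr (BERaux.fUp_le_one _ _ _))
      rw [hz2, add_zero]
      by_cases hQ : h s j ≠ e1
      · rw [if_pos hQ]
        exact (min_le_left _ _).trans (by rw [BERaux.psi_self])
      · rw [if_neg hQ]
        have hmem : s ∈ ((B j e1))ᶜ := (hmemBc s j e1).mpr (not_not.mp hQ)
        rw [BERaux.fUp_of_mem (n := n) hmem]
        simpa using min_le_right (BERaux.psi c e1 e1) (1 - 1 : ℝ)
    · rw [hxj]
      have hz1 : min (BERaux.psi c e1 e2) (1 - BERaux.fUp n ((B j e1))ᶜ s) = 0 := by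
        rw [BERaux.psi_of_far hfar12]
        exact min_eq_left (sub_nonneg.mpr (BERaux.fUp_le_one _ _ _))
      rw [hz1, zero_add]
      by_cases hQ : h s j ≠ e2
      · rw [if_pos hQ]
        exact (min_le_left _ _).trans (by rw [BERaux.psi_self])
      · rw [if_neg hQ]
        have hmem : s ∈ ((B j e2))ᶜ := (hmemBc s j e2).mpr (not_not.mp hQ)
        rw [BERaux.fUp_of_mem (n := n) hmem]
        simpa using min_le_right (BERaux.psi c e2 e2) (1 - 1 : ℝ)
  -- assemble
  filter_upwards [ae_all_iff.mpr hUconv, ae_all_iff.mpr hLconv] with ω hU hL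
  set a : ℕ → ℝ := fun L => (1 / (L:ℝ)) * ∑ ℓ ∈ Finset.range L, ∑ j : Fin d,
      (if h (S L ℓ ω) j ≠ X L ℓ ω j then (1:ℝ) else 0) with ha
  have ha0 : ∀ L, 0 ≤ a L := by
    intro L
    rw [ha]
    apply mul_nonneg (by positivity)
    apply Finset.sum_nonneg
    intro ℓ _
    apply Finset.sum_nonneg
    intro j _
    split <;> norm_num
  have haU : ∀ (n : ℕ) (L : ℕ), a L ≤ (1 / (L:ℝ)) * ∑ ℓ ∈ Finset.range L, ΦU n (X L ℓ ω, S L ℓ ω) := by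
    intro n L
    rw [ha, hΦU]
    apply mul_le_mul_of_nonneg_left _ (by positivity)
    apply Finset.sum_le_sum
    intro ℓ hℓ
    apply Finset.sum_le_sum
    intro j _
    exact hptU n (X L ℓ ω) (S L ℓ ω) (hXval L ℓ ω (Finset.mem_range.mp hℓ)) j
  have haL : ∀ (n : ℕ) (L : ℕ), ((1 : ℝ) / (L:ℝ)) * ∑ ℓ ∈ Finset.range L, ΦL n (X L ℓ ω, S L ℓ ω) ≤ a L := by
    intro n L
    rw [ha, hΦL]
    apply mul_le_mul_of_nonneg_left _ (by positivity)
    apply Finset.sum_le_sum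
    intro ℓ hℓ
    apply Finset.sum_le_sum
    intro j _
    exact hptL n (X L ℓ ω) (S L ℓ ω) (hXval L ℓ ω (Finset.mem_range.mp hℓ)) j
  have hbdd_below : IsBoundedUnder (· ≥ ·) atTop a := isBoundedUnder_of ⟨0, fun L => ha0 L⟩
  have hbdd_above : IsBoundedUnder (· ≤ ·) atTop a :=
    ((hU 0).isBoundedUnder_le).mono_le (Eventually.of_forall (haU 0))
  have hlimsup : limsup a atTop ≤ T := by
    apply ge_of_tendsto' hIU
    intro n
    calc limsup a atTop
        ≤ limsup (fun L : ℕ => (1 / (L:ℝ)) * ∑ ℓ ∈ Finset.range L, ΦU n (X L ℓ ω, S L ℓ ω)) atTop :=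
          limsup_le_limsup (Eventually.of_forall (haU n))
            (hbdd_below.isCoboundedUnder_le) ((hU n).isBoundedUnder_le)
      _ = ∫ ω, ΦU n (xbar ω, xbar ω + g ω) ∂ℙ := (hU n).limsup_eq
  have hliminf : T ≤ liminf a atTop := by
    apply le_of_tendsto' hIL
    intro n
    calc (∫ ω, ΦL n (xbar ω, xbar ω + g ω) ∂ℙ)
        = liminf (fun L : ℕ => (1 / (L:ℝ)) * ∑ ℓ ∈ Finset.range L, ΦL n (X L ℓ ω, S L ℓ ω)) atTop :=
          ((hL n).liminf_eq).symm
      _ ≤ liminf a atTop :=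
          liminf_le_liminf (Eventually.of_forall (haL n))
            ((hL n).isBoundedUnder_ge) (hbdd_above.isCoboundedUnder_ge)
  have hfin : Tendsto a atTop (𝓝 T) :=
    tendsto_of_le_liminf_of_limsup_le hliminf hlimsup hbdd_above hbdd_below
  have hfinal : ∀ L : ℕ, (1 / (d:ℝ)) * ((1 / (L:ℝ)) * ∑ ℓ ∈ Finset.range L, ∑ j : Fin d,
      (if h (S L ℓ ω) j ≠ X L ℓ ω j then (1:ℝ) else 0))
      = (1 / ((L:ℝ) * d)) * ∑ ℓ ∈ Finset.range L, ∑ j : Fin d,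
      (if h (S L ℓ ω) j ≠ X L ℓ ω j then (1:ℝ) else 0) := by
    intro L
    ring
  exact Filter.Tendsto.congr hfinal (hfin.const_mul (1 / (d:ℝ)))
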